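/- arXiv:2401.15166 — 4 statements merged into one kernel-verified Lean document; each statement's English description precedes it below -/
import Mathlib

section
/- Let p be a probability-distribution matrix with coupling polynomial f and reflected polynomial f̄. Then the sum, over all tuples x₁,x₂,x₃,y₁,y₂,y₃ ∈ {0,…,m} and u₁,u₂,u₃,v₁,v₂,v₃ ∈ {0,…,M−1} satisfying (x₁+x₂+x₃) − (y₁+y₂+y₃) = 0 in ℤ and M ∣ (u₁+u₂+u₃) − (v₁+v₂+v₃), of the product p(x₁,u₁)·p(x₂,u₂)·p(x₃,u₃)·p(y₁,v₁)·p(y₂,v₂)·p(y₃,v₃), equals Σ_{b ∈ ℤ, M ∣ b} [f³ · f̄³]_{(0,b)}. (This is the quantity P₆(p), the probability that a cycle-6 candidate in the base matrix remains a cycle-6 candidate in the MD protograph under random partitioning and relocations according to p.) -/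
/-!
Expanding `f^n * f̄^n` over the choices of `n` entries `(x k, u k)` from `f` and `n` entries
`(y k, v k)` from `f̄`, each choice contributes the monomial of exponent
`(Σ x k - Σ y k, Σ u k - Σ v k)` with coefficient `Π p (x k, u k) * Π p (y k, v k)`.
The functional `g ↦ Σ_{M ∣ b} [g]_{(0,b)}` is additive, and on such a monomial it returns the
coefficient exactly when both cycle conditions hold.
-/

/-- `f_a`: the Laurent polynomial `Σ_{i,j} p(i,j) X^{a·i} Y^{a·j}` in the monoid algebra
`AddMonoidAlgebra ℝ (ℤ × ℤ)`; `fpa p 1` is the coupling polynomial `f` and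
`fpa p (-1)` is the reflected polynomial `f̄`. -/
noncomputable def fpa {m M : ℕ} (p : Fin (m + 1) × Fin M → ℝ) (a : ℤ) :
    AddMonoidAlgebra ℝ (ℤ × ℤ) :=
  ∑ ij : Fin (m + 1) × Fin M,
    AddMonoidAlgebra.single (a * (ij.1 : ℤ), a * (ij.2 : ℤ)) (p ij)

/-- `Σ_{b ∈ ℤ, M ∣ b} [g]_{(0,b)}`. -/
noncomputable def divCoeffSum (M : ℕ) (g : AddMonoidAlgebra ℝ (ℤ × ℤ)) : ℝ :=
  ∑ᶠ (b : ℤ) (_ : (M : ℤ) ∣ b), g.coeff (0, b)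

open AddMonoidAlgebra

theorem Fintype.sum_pi_prod {ι α β R : Type*} [Fintype ι] [DecidableEq ι] [Fintype α]
    [Fintype β] [AddCommMonoid R] (F : (ι → α × β) → R) :
    ∑ w, F w = ∑ x : ι → α, ∑ u : ι → β, F fun k => (x k, u k) := by
  rw [← (Equiv.arrowProdEquivProdArrow ι (fun _ => α) (fun _ => β)).symm.sum_comp,
    Fintype.sum_prod_type]
  rfl

lemma finite_support_coeff_zero_left (g : AddMonoidAlgebra ℝ (ℤ × ℤ)) :
    (Function.support fun b : ℤ => g.coeff (0, b)).Finite :=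
  g.coeff.hasFiniteSupport.preimage (Prod.mk_right_injective 0).injOn

lemma divCoeffSum_add (M : ℕ) (g h : AddMonoidAlgebra ℝ (ℤ × ℤ)) :
    divCoeffSum M (g + h) = divCoeffSum M g + divCoeffSum M h := by
  simp only [divCoeffSum, coeff_add, Finsupp.add_apply]
  exact finsum_mem_add_distrib' ((finite_support_coeff_zero_left g).inter_of_right _)
    ((finite_support_coeff_zero_left h).inter_of_right _)

noncomputable def divCoeffSumHom (M : ℕ) : AddMonoidAlgebra ℝ (ℤ × ℤ) →+ ℝ :=
  AddMonoidHom.mk' (divCoeffSum M) (divCoeffSum_add M)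

lemma divCoeffSumHom_apply (M : ℕ) (g : AddMonoidAlgebra ℝ (ℤ × ℤ)) :
    divCoeffSumHom M g = divCoeffSum M g :=
  rfl

lemma divCoeffSum_single (M : ℕ) (s t : ℤ) (c : ℝ) :
    divCoeffSum M (single (s, t) c) = if s = 0 ∧ (M : ℤ) ∣ t then c else 0 := by
  classical
  have hcoeff : ∀ b, (single (s, t) c).coeff (0, b) = if b = t ∧ s = 0 then c else 0 := by
    intro b
    simp [coeff_single, Finsupp.single_apply, Prod.ext_iff, eq_comm, and_comm]
  simp only [divCoeffSum, hcoeff, finsum_eq_if]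
  rw [finsum_eq_single _ t fun b hb => by simp [hb]]
  simp only [true_and]
  split_ifs <;> tauto

lemma fpa_pow_eq_sum {m M : ℕ} (p : Fin (m + 1) × Fin M → ℝ) (a : ℤ) (n : ℕ) :
    fpa p a ^ n = ∑ w : Fin n → Fin (m + 1) × Fin M,
      single (∑ k, a * ((w k).1 : ℤ), ∑ k, a * ((w k).2 : ℤ)) (∏ k, p (w k)) := by
  rw [← Fin.prod_const, fpa, Finset.prod_univ_sum, Fintype.piFinset_univ]
  simp only [prod_single, ← prod_mk_sum]

open Classical in
theorem sum_eq_divCoeffSum_fpa_pow_mul_fpa_neg_pow {m M : ℕ} (p : Fin (m + 1) × Fin M → ℝ)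
    (n : ℕ) :
    (∑ x : Fin n → Fin (m + 1), ∑ y : Fin n → Fin (m + 1),
      ∑ u : Fin n → Fin M, ∑ v : Fin n → Fin M,
        if (∑ k : Fin n, ((x k : ℤ) - (y k : ℤ))) = 0 ∧
            (M : ℤ) ∣ ∑ k : Fin n, ((u k : ℤ) - (v k : ℤ)) then
          (∏ k : Fin n, p (x k, u k)) * ∏ k : Fin n, p (y k, v k)
        else 0) =
    divCoeffSum M (fpa p 1 ^ n * fpa p (-1) ^ n) := by
  rw [fpa_pow_eq_sum, fpa_pow_eq_sum, Finset.sum_mul_sum, ← divCoeffSumHom_apply]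
  simp only [map_sum, single_mul_single, Prod.mk_add_mk, divCoeffSumHom_apply,
    divCoeffSum_single, Fintype.sum_pi_prod]
  refine Fintype.sum_congr _ _ fun x => ?_
  rw [Finset.sum_comm]
  refine Fintype.sum_congr _ _ fun y => Fintype.sum_congr _ _ fun u =>
    Fintype.sum_congr _ _ fun v => ?_
  simp only [one_mul, neg_mul, Finset.sum_neg_distrib, ← sub_eq_add_neg, Finset.sum_sub_distrib]

open Classical in
theorem stmt0_general {m M : ℕ} (p : Fin (m + 1) × Fin M → ℝ) :
    (∑ x : Fin 3 → Fin (m + 1), ∑ y : Fin 3 → Fin (m + 1),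
      ∑ u : Fin 3 → Fin M, ∑ v : Fin 3 → Fin M,
        if (∑ k : Fin 3, (((x k : ℤ)) - ((y k : ℤ))) = 0 ∧
            (M : ℤ) ∣ ∑ k : Fin 3, (((u k : ℤ)) - ((v k : ℤ)))) then
          (∏ k : Fin 3, p (x k, u k)) * ∏ k : Fin 3, p (y k, v k)
        else 0) =
    divCoeffSum M ((fpa p 1) ^ 3 * (fpa p (-1)) ^ 3) :=
  sum_eq_divCoeffSum_fpa_pow_mul_fpa_neg_pow p 3

open Classical in
/-- the expression `P₆(p)` for the probability that a cycle-6 candidate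
survives random partitioning and relocations. -/
theorem stmt0 {m M : ℕ} (hm : 1 ≤ m) (hM : 2 ≤ M)
    (p : Fin (m + 1) × Fin M → ℝ) (hp0 : ∀ ij, 0 ≤ p ij)
    (hp1 : ∑ ij : Fin (m + 1) × Fin M, p ij = 1) :
    (∑ x : Fin 3 → Fin (m + 1), ∑ y : Fin 3 → Fin (m + 1),
      ∑ u : Fin 3 → Fin M, ∑ v : Fin 3 → Fin M,
        if (∑ k : Fin 3, (((x k : ℤ)) - ((y k : ℤ))) = 0 ∧
            (M : ℤ) ∣ ∑ k : Fin 3, (((u k : ℤ)) - ((v k : ℤ)))) then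
          (∏ k : Fin 3, p (x k, u k)) * ∏ k : Fin 3, p (y k, v k)
        else 0) =
    divCoeffSum M ((fpa p 1) ^ 3 * (fpa p (-1)) ^ 3) :=
  stmt0_general p
end

section
/- Let γ ≥ 3 and κ ≥ 3 be integers and let G = completeBipartiteGraph (Fin γ) (Fin κ) be the complete bipartite graph with parts of sizes γ and κ. Then the number of pairs (v, w), where v is a vertex of G and w is a closed walk of length 6 based at v that is a cycle, equals 72·C(γ,3)·C(κ,3). (Since each undirected, unbased 6-cycle corresponds to exactly 12 such rooted directed cycle walks, the number of cycle-6 candidates in the all-one γ × κ base matrix is 6·C(γ,3)·C(κ,3).) -/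
open SimpleGraph
open scoped Classical
section
variable {γ κ : ℕ}

abbrev D (n : ℕ) := {t : Fin n × Fin n × Fin n // t.1 ≠ t.2.1 ∧ t.1 ≠ t.2.2 ∧ t.2.1 ≠ t.2.2}

lemma adjLR (a : Fin γ) (b : Fin κ) :
    (completeBipartiteGraph (Fin γ) (Fin κ)).Adj (Sum.inl a) (Sum.inr b) := by simp

lemma adjRL (b : Fin κ) (a : Fin γ) :
    (completeBipartiteGraph (Fin γ) (Fin κ)).Adj (Sum.inr b) (Sum.inl a) := by simp

def wLeft (a0 a1 a2 : Fin γ) (b0 b1 b2 : Fin κ) :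
    (completeBipartiteGraph (Fin γ) (Fin κ)).Walk (Sum.inl a0) (Sum.inl a0) :=
  .cons (adjLR a0 b0) (.cons (adjRL b0 a1) (.cons (adjLR a1 b1) (.cons (adjRL b1 a2)
    (.cons (adjLR a2 b2) (.cons (adjRL b2 a0) .nil)))))

def wRight (b0 b1 b2 : Fin κ) (a0 a1 a2 : Fin γ) :
    (completeBipartiteGraph (Fin γ) (Fin κ)).Walk (Sum.inr b0) (Sum.inr b0) :=
  .cons (adjRL b0 a0) (.cons (adjLR a0 b1) (.cons (adjRL b1 a1) (.cons (adjLR a1 b2)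
    (.cons (adjRL b2 a2) (.cons (adjLR a2 b0) .nil)))))

lemma wLeft_isCycle {a0 a1 a2 : Fin γ} {b0 b1 b2 : Fin κ}
    (ha1 : a0 ≠ a1) (ha2 : a0 ≠ a2) (ha3 : a1 ≠ a2)
    (hb1 : b0 ≠ b1) (hb2 : b0 ≠ b2) (hb3 : b1 ≠ b2) :
    (wLeft a0 a1 a2 b0 b1 b2).IsCycle := by
  have := ha1.symm; have := ha2.symm; have := ha3.symm
  have := hb1.symm; have := hb2.symm; have := hb3.symm
  rw [Walk.isCycle_def]
  refine ⟨?_, by simp [wLeft], ?_⟩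
  · rw [Walk.isTrail_def]; simp [wLeft, Sym2.eq, Sym2.rel_iff']; tauto
  · simp [wLeft]; tauto

lemma wRight_isCycle {b0 b1 b2 : Fin κ} {a0 a1 a2 : Fin γ}
    (hb1 : b0 ≠ b1) (hb2 : b0 ≠ b2) (hb3 : b1 ≠ b2)
    (ha1 : a0 ≠ a1) (ha2 : a0 ≠ a2) (ha3 : a1 ≠ a2) :
    (wRight b0 b1 b2 a0 a1 a2).IsCycle := by
  have := ha1.symm; have := ha2.symm; have := ha3.symm
  have := hb1.symm; have := hb2.symm; have := hb3.symm
  rw [Walk.isCycle_def]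
  refine ⟨?_, by simp [wRight], ?_⟩
  · rw [Walk.isTrail_def]; simp [wRight, Sym2.eq, Sym2.rel_iff']; tauto
  · simp [wRight]; tauto

def WT (γ κ : ℕ) := Σ v : Fin γ ⊕ Fin κ,
  {w : (completeBipartiteGraph (Fin γ) (Fin κ)).Walk v v // w.length = 6 ∧ w.IsCycle}

def f (γ κ : ℕ) : Bool × D γ × D κ → WT γ κ
  | (false, a, b) => ⟨Sum.inl a.1.1, wLeft a.1.1 a.1.2.1 a.1.2.2 b.1.1 b.1.2.1 b.1.2.2, rfl,
      wLeft_isCycle a.2.1 a.2.2.1 a.2.2.2 b.2.1 b.2.2.1 b.2.2.2⟩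
  | (true, a, b) => ⟨Sum.inr b.1.1, wRight b.1.1 b.1.2.1 b.1.2.2 a.1.1 a.1.2.1 a.1.2.2, rfl,
      wRight_isCycle b.2.1 b.2.2.1 b.2.2.2 a.2.1 a.2.2.1 a.2.2.2⟩

lemma f_inj : Function.Injective (f γ κ) := by
  rintro ⟨s1, ⟨⟨x1, x2, x3⟩, hx⟩, ⟨⟨y1, y2, y3⟩, hy⟩⟩
    ⟨s2, ⟨⟨x1', x2', x3'⟩, hx'⟩, ⟨⟨y1', y2', y3'⟩, hy'⟩⟩ h
  cases s1 <;> cases s2 <;> simp only [f] at h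
  · -- false, false
    obtain ⟨h1, h2⟩ := Sigma.mk.inj_iff.mp h
    obtain rfl : x1 = x1' := by simpa using h1
    have h3 := congrArg (fun s => (Subtype.val s).support) (eq_of_heq h2)
    simp only [wLeft, Walk.support_cons, Walk.support_nil] at h3
    simp only [List.cons.injEq, Sum.inl.injEq, Sum.inr.injEq] at h3
    obtain ⟨-, rfl, rfl, rfl, rfl, rfl, -⟩ := h3
    rfl
  · exact absurd (congrArg Sigma.fst h) (by simp)
  · exact absurd (congrArg Sigma.fst h) (by simp)
  · -- true, true
    obtain ⟨h1, h2⟩ := Sigma.mk.inj_iff.mp h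
    obtain rfl : y1 = y1' := by simpa using h1
    have h3 := congrArg (fun s => (Subtype.val s).support) (eq_of_heq h2)
    simp only [wRight, Walk.support_cons, Walk.support_nil] at h3
    simp only [List.cons.injEq, Sum.inl.injEq, Sum.inr.injEq] at h3
    obtain ⟨-, rfl, rfl, rfl, rfl, rfl, -⟩ := h3
    rfl

lemma f_surj : Function.Surjective (f γ κ) := by
  rintro ⟨v, w, hlen, hcyc⟩
  cases v with
  | inl a0 =>
    cases w with
    | nil => simp at hlen
    | cons h1 w =>
      rename_i u1
      cases u1 with
      | inl x => simp at h1
      | inr b0 =>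
        cases w with
        | cons h2 w =>
          rename_i u2
          cases u2 with
          | inr x => simp at h2
          | inl a1 =>
            cases w with
            | nil => simp at hlen
            | cons h3 w =>
              rename_i u3
              cases u3 with
              | inl x => simp at h3
              | inr b1 =>
                cases w with
                | cons h4 w =>
                  rename_i u4
                  cases u4 with
                  | inr x => simp at h4
                  | inl a2 =>
                    cases w with
                    | nil => simp at hlen
                    | cons h5 w =>
                      rename_i u5
                      cases u5 with
                      | inl x => simp at h5
                      | inr b2 =>
                        cases w with
                        | cons h6 w =>
                          cases w with
                          | cons h7 w => simp [Walk.length_cons] at hlen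
                          | nil =>
                            rw [Walk.isCycle_def] at hcyc
                            obtain ⟨-, -, hnd⟩ := hcyc
                            simp [List.nodup_cons] at hnd
                            refine ⟨(false, ⟨(a0, a1, a2), ?_, ?_, ?_⟩,
                              ⟨(b0, b1, b2), ?_, ?_, ?_⟩), rfl⟩ <;> tauto
  | inr b0 =>
    cases w with
    | nil => simp at hlen
    | cons h1 w =>
      rename_i u1
      cases u1 with
      | inr x => simp at h1
      | inl a0 =>
        cases w with
        | cons h2 w =>
          rename_i u2
          cases u2 with
          | inl x => simp at h2
          | inr b1 =>
            cases w with
            | nil => simp at hlen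
            | cons h3 w =>
              rename_i u3
              cases u3 with
              | inr x => simp at h3
              | inl a1 =>
                cases w with
                | cons h4 w =>
                  rename_i u4
                  cases u4 with
                  | inl x => simp at h4
                  | inr b2 =>
                    cases w with
                    | nil => simp at hlen
                    | cons h5 w =>
                      rename_i u5
                      cases u5 with
                      | inr x => simp at h5
                      | inl a2 =>
                        cases w with
                        | cons h6 w =>
                          cases w with
                          | cons h7 w => simp [Walk.length_cons] at hlen
                          | nil =>
                            rw [Walk.isCycle_def] at hcyc
                            obtain ⟨-, -, hnd⟩ := hcyc
                            simp [List.nodup_cons] at hnd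
                            refine ⟨(true, ⟨(a0, a1, a2), ?_, ?_, ?_⟩,
                              ⟨(b0, b1, b2), ?_, ?_, ?_⟩), rfl⟩ <;> tauto

lemma vec3_inj {α : Type*} {a b c : α} (h1 : a ≠ b) (h2 : a ≠ c) (h3 : b ≠ c) :
    Function.Injective ![a, b, c] := by
  intro i j hij
  fin_cases i <;> fin_cases j <;> simp_all

def DEquiv (n : ℕ) : D n ≃ (Fin 3 ↪ Fin n) where
  toFun t := ⟨![t.1.1, t.1.2.1, t.1.2.2], vec3_inj t.2.1 t.2.2.1 t.2.2.2⟩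
  invFun e := ⟨(e 0, e 1, e 2), e.injective.ne (by decide), e.injective.ne (by decide),
    e.injective.ne (by decide)⟩
  left_inv t := rfl
  right_inv e := by ext i; fin_cases i <;> rfl

lemma cardD (n : ℕ) : Nat.card (D n) = 6 * n.choose 3 := by
  rw [Nat.card_congr (DEquiv n), Nat.card_eq_fintype_card, Fintype.card_embedding_eq]
  have h := Nat.descFactorial_eq_factorial_mul_choose n 3
  rw [show Nat.factorial 3 = 6 from rfl] at h
  rw [← h]
  simp [Nat.descFactorial]

end

/-- in the complete bipartite graph with parts `Fin γ` and `Fin κ`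
(`γ, κ ≥ 3`), the number of pairs `(v, w)` of a vertex `v` together with a closed walk
`w` of length 6 based at `v` that is a cycle equals `72·C(γ,3)·C(κ,3)`. -/
theorem stmt2 {γ κ : ℕ} (hγ : 3 ≤ γ) (hκ : 3 ≤ κ) :
    Nat.card (Σ v : Fin γ ⊕ Fin κ,
      {w : (completeBipartiteGraph (Fin γ) (Fin κ)).Walk v v // w.length = 6 ∧ w.IsCycle}) =
    72 * γ.choose 3 * κ.choose 3 := by
  have hb : Function.Bijective (f γ κ) := ⟨f_inj, f_surj⟩
  have := (Nat.card_eq_of_bijective _ hb).symm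
  rw [show (Σ v : Fin γ ⊕ Fin κ,
      {w : (completeBipartiteGraph (Fin γ) (Fin κ)).Walk v v // w.length = 6 ∧ w.IsCycle}) = WT γ κ
    from rfl, this, Nat.card_prod, Nat.card_prod, cardD, cardD, Nat.card_eq_fintype_card]
  simp
  ring
end

section
/- Fix integers m ≥ 1 and M ≥ 2, and define P₆ : ((Fin (m+1) × Fin M) → ℝ) → ℝ by P₆(p) = Σ_{b ∈ ℤ, M ∣ b} [f_p³ · f̄_p³]_{(0,b)}. Then P₆ is differentiable at every p, and for all i ∈ {0,…,m} and j ∈ {0,…,M−1}, the partial derivative of P₆ with respect to the coordinate p(i,j) equals 6 · Σ_{b ∈ ℤ, M ∣ b} [f_p³ · f̄_p²]_{(i, b+j)}, where j is cast to ℤ. -/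
/-- `P₆(p) = Σ_{b ∈ ℤ, M ∣ b} [f_p³ · f̄_p³]_{(0,b)}`. -/
noncomputable def P6 (m M : ℕ) (p : Fin (m + 1) × Fin M → ℝ) : ℝ :=
  ∑ᶠ (b : ℤ) (_ : (M : ℤ) ∣ b), ((fpa p 1) ^ 3 * (fpa p (-1)) ^ 3).coeff (0, b)

open AddMonoidAlgebra

theorem MultilinearMap.continuous_on_pi {κ ι R F : Type*} [Fintype κ] [Fintype ι]
    [CommSemiring R] [TopologicalSpace R] [IsTopologicalSemiring R]
    [AddCommMonoid F] [Module R F] [TopologicalSpace F] [ContinuousAdd F] [ContinuousSMul R F]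
    (f : MultilinearMap R (fun _ : κ => ι → R) F) : Continuous f := by
  classical
  have hf : ⇑f = fun q => ∑ r : κ → ι, (∏ k, q k (r k)) •
      f fun k j => if r k = j then 1 else 0 := by
    funext q
    conv_lhs => rw [funext fun k => pi_eq_sum_univ (q k)]
    simp only [MultilinearMap.map_sum, MultilinearMap.map_smul_univ]
  rw [hf]
  fun_prop

theorem ContinuousMultilinearMap.hasFDerivAt_diag {𝕜 ι E F : Type*} [NontriviallyNormedField 𝕜]
    [Fintype ι] [DecidableEq ι] [NormedAddCommGroup E] [NormedSpace 𝕜 E]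
    [NormedAddCommGroup F] [NormedSpace 𝕜 F]
    (f : ContinuousMultilinearMap 𝕜 (fun _ : ι => E) F) (x : E) :
    HasFDerivAt (fun x => f fun _ => x) (∑ i, f.toContinuousLinearMap (fun _ => x) i) x := by
  simpa using HasFDerivAt.multilinear_comp f (fun _ => hasFDerivAt_id x)

section Invert

variable {R G : Type*} [CommSemiring R] [AddCommGroup G]

variable (R G) in
noncomputable def invert : R[G] ≃ₐ[R] R[G] := domCongr R R (AddEquiv.neg G)

theorem invert_single (x : G) (r : R) : invert R G (single x r) = single (-x) r :=
  domCongr_single _ _ _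

theorem coeff_invert (g : R[G]) (x : G) : (invert R G g).coeff x = g.coeff (-x) :=
  coeff_domCongr _ _ _

@[simp]
theorem invert_invert (g : R[G]) : invert R G (invert R G g) = g := by
  ext x
  simp [coeff_invert]

end Invert

section DvdCoeffSum

variable {R : Type*} [CommSemiring R]

theorem finite_inter_support_coeff_zero (g : R[ℤ × ℤ]) (s : Set ℤ) :
    (s ∩ Function.support fun b => g.coeff (0, b)).Finite :=
  ((Finsupp.hasFiniteSupport g.coeff).preimage (Prod.mk_right_injective 0).injOn).subset
    Set.inter_subset_right

variable (R) in
noncomputable def dvdCoeffSum (M : ℕ) : R[ℤ × ℤ] →ₗ[R] R where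
  toFun g := ∑ᶠ (b : ℤ) (_ : (M : ℤ) ∣ b), g.coeff (0, b)
  map_add' g h := finsum_mem_add_distrib' (s := {b | (M : ℤ) ∣ b})
    (finite_inter_support_coeff_zero g _) (finite_inter_support_coeff_zero h _)
  map_smul' c g := ((AddMonoidHom.mulLeft c).map_finsum_mem' (s := {b | (M : ℤ) ∣ b})
    (finite_inter_support_coeff_zero g _)).symm

theorem dvdCoeffSum_apply (M : ℕ) (g : R[ℤ × ℤ]) :
    dvdCoeffSum R M g = ∑ᶠ (b : ℤ) (_ : (M : ℤ) ∣ b), g.coeff (0, b) := rfl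

theorem dvdCoeffSum_mul_single (M : ℕ) (g : R[ℤ × ℤ]) (a c : ℤ) :
    dvdCoeffSum R M (g * single (-a, -c) 1) = ∑ᶠ (b : ℤ) (_ : (M : ℤ) ∣ b), g.coeff (a, b + c) := by
  simp [dvdCoeffSum_apply, coeff_mul_single_apply]

theorem dvdCoeffSum_invert (M : ℕ) (g : R[ℤ × ℤ]) :
    dvdCoeffSum R M (invert R (ℤ × ℤ) g) = dvdCoeffSum R M g := by
  simp only [dvdCoeffSum_apply, coeff_invert, Prod.neg_mk, neg_zero]
  rw [← finsum_comp_equiv (Equiv.neg ℤ)]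
  simp [dvd_neg]

theorem dvdCoeffSum_single_mul_invert (M : ℕ) (g : R[ℤ × ℤ]) (a c : ℤ) :
    dvdCoeffSum R M (single (a, c) 1 * invert R (ℤ × ℤ) g) =
      ∑ᶠ (b : ℤ) (_ : (M : ℤ) ∣ b), g.coeff (a, b + c) := by
  rw [← dvdCoeffSum_mul_single, mul_comm, ← dvdCoeffSum_invert, map_mul, invert_single,
    invert_invert, Prod.neg_mk]

end DvdCoeffSum

section P6Form

variable {m M : ℕ}

noncomputable def fpaLinearMap (a : ℤ) : (Fin (m + 1) × Fin M → ℝ) →ₗ[ℝ] ℝ[ℤ × ℤ] where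
  toFun p := fpa p a
  map_add' p q := by simp [fpa, Finset.sum_add_distrib, single_add]
  map_smul' c p := by simp [fpa, Finset.smul_sum, smul_single]

theorem fpa_single (i : Fin (m + 1)) (j : Fin M) (a : ℤ) :
    fpa (Pi.single (i, j) 1) a = single (a * i, a * j) (1 : ℝ) := by
  rw [fpa, Finset.sum_eq_single (i, j)] <;> simp_all

theorem invert_fpa (p : Fin (m + 1) × Fin M → ℝ) (a : ℤ) :
    invert ℝ (ℤ × ℤ) (fpa p a) = fpa p (-a) := by
  simp [fpa, map_sum, invert_single]

def signs : Fin 6 → ℤ := ![1, 1, 1, -1, -1, -1]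

noncomputable def P6Form (m M : ℕ) :
    ContinuousMultilinearMap ℝ (fun _ : Fin 6 => Fin (m + 1) × Fin M → ℝ) ℝ where
  toMultilinearMap := (dvdCoeffSum ℝ M).compMultilinearMap
    ((MultilinearMap.mkPiAlgebra ℝ (Fin 6) ℝ[ℤ × ℤ]).compLinearMap
      fun k => fpaLinearMap (signs k))
  cont := MultilinearMap.continuous_on_pi _

theorem P6Form_apply (q : Fin 6 → Fin (m + 1) × Fin M → ℝ) :
    P6Form m M q = dvdCoeffSum ℝ M (∏ k, fpa (q k) (signs k)) := rfl

theorem P6_eq_P6Form_diag : P6 m M = fun p => P6Form m M fun _ => p := by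
  funext p
  have hprod : ∏ k, fpa p (signs k) = (fpa p 1) ^ 3 * (fpa p (-1)) ^ 3 := by
    simp only [signs, Fin.prod_univ_six, Matrix.cons_val_zero, Matrix.cons_val_one,
      Matrix.cons_val]
    ring
  rw [P6Form_apply, hprod]
  rfl

theorem sum_P6Form_update (p v : Fin (m + 1) × Fin M → ℝ) :
    ∑ k, P6Form m M (Function.update (fun _ => p) k v) =
      3 * dvdCoeffSum ℝ M (fpa v 1 * ((fpa p 1) ^ 2 * (fpa p (-1)) ^ 3)) +
      3 * dvdCoeffSum ℝ M ((fpa p 1) ^ 3 * (fpa p (-1)) ^ 2 * fpa v (-1)) := by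
  simp only [P6Form_apply, signs, Fin.sum_univ_six, Fin.prod_univ_six, Function.update_apply,
    Matrix.cons_val_zero, Matrix.cons_val_one, Matrix.cons_val, Fin.reduceEq, reduceIte]
  ring_nf

end P6Form

theorem stmt9_general {m M : ℕ} :
    Differentiable ℝ (P6 m M) ∧
    ∀ (p : Fin (m + 1) × Fin M → ℝ) (i : Fin (m + 1)) (j : Fin M),
      fderiv ℝ (P6 m M) p (Pi.single (i, j) 1) =
        6 * ∑ᶠ (b : ℤ) (_ : (M : ℤ) ∣ b),
          ((fpa p 1) ^ 3 * (fpa p (-1)) ^ 2).coeff ((i : ℤ), b + (j : ℤ)) := by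
  have hderiv p := P6_eq_P6Form_diag (m := m) (M := M) ▸ (P6Form m M).hasFDerivAt_diag p
  refine ⟨fun p => (hderiv p).differentiableAt, fun p i j => ?_⟩
  have hsq : (fpa p 1) ^ 2 * (fpa p (-1)) ^ 3 =
      invert ℝ (ℤ × ℤ) ((fpa p 1) ^ 3 * (fpa p (-1)) ^ 2) := by
    simp only [map_mul, map_pow, invert_fpa, neg_neg]
    ring
  rw [(hderiv p).fderiv, _root_.sum_apply]
  simp only [ContinuousMultilinearMap.toContinuousLinearMap_apply]
  rw [sum_P6Form_update, fpa_single, fpa_single, hsq, dvdCoeffSum_single_mul_invert]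
  simp only [one_mul, neg_one_mul, dvdCoeffSum_mul_single]
  ring

/-- `P₆` is differentiable everywhere and its partial derivative with
respect to the coordinate `p(i,j)` is `6 · Σ_{b ∈ ℤ, M ∣ b} [f_p³ · f̄_p²]_{(i, b+j)}`. -/
theorem stmt9 {m M : ℕ} (hm : 1 ≤ m) (hM : 2 ≤ M) :
    Differentiable ℝ (P6 m M) ∧
    ∀ (p : Fin (m + 1) × Fin M → ℝ) (i : Fin (m + 1)) (j : Fin M),
      fderiv ℝ (P6 m M) p (Pi.single (i, j) 1) =
        6 * ∑ᶠ (b : ℤ) (_ : (M : ℤ) ∣ b),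
          ((fpa p 1) ^ 3 * (fpa p (-1)) ^ 2).coeff ((i : ℤ), b + (j : ℤ)) :=
  stmt9_general
end

section
/- Fix integers m ≥ 1, M ≥ 2, γ ≥ 4, and κ ≥ 4, and set w₁ = C(γ,2)C(κ,2), w₂ = 3C(γ,2)C(κ,3) + 3C(γ,3)C(κ,2), w₃ = 18C(γ,3)C(κ,3), and w₄ = 6C(γ,2)C(κ,4) + 6C(γ,4)C(κ,2) + 36C(γ,3)C(κ,4) + 36C(γ,4)C(κ,3) + 72C(γ,4)C(κ,4). Define N₈ : ((Fin (m+1) × Fin M) → ℝ) → ℝ by N₈(p) = Σ_{b ∈ ℤ, M ∣ b} { w₁[f_{p,2}² · f_{p,−2}²]_{(0,b)} + w₂[f_{p,2} · f_{p,−2} · f_p² · f̄_p²]_{(0,b)} + w₃[f_{p,2} · f_p² · f̄_p⁴]_{(0,b)} + w₄[f_p⁴ · f̄_p⁴]_{(0,b)} }. Then N₈ is differentiable at every p, and for all i ∈ {0,…,m} and j ∈ {0,…,M−1} (with j cast to ℤ), the partial derivative of N₈ with respect to the coordinate p(i,j) equals Σ_{b ∈ ℤ, M ∣ b} { 4w₁[f_{p,2}²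 · f_{p,−2}]_{(2i, b+2j)} + 2w₂[f_{p,2} · f_p² · f̄_p²]_{(2i, b+2j)} + 4w₂[f_{p,2} · f_{p,−2} · f_p² · f̄_p]_{(i, b+j)} + w₃[f_p² · f̄_p⁴]_{(−2i, b−2j)} + 2w₃[f_{p,2} · f_p · f̄_p⁴]_{(−i, b−j)} + 4w₃[f_{p,2} · f_p² · f̄_p³]_{(i, b+j)} + 8w₄[f_p⁴ · f̄_p³]_{(i, b+j)} }. -/
noncomputable def w1 (γ κ : ℕ) : ℝ := (γ.choose 2 * κ.choose 2 : ℕ)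

noncomputable def w2 (γ κ : ℕ) : ℝ :=
  (3 * (γ.choose 2 * κ.choose 3) + 3 * (γ.choose 3 * κ.choose 2) : ℕ)

noncomputable def w3 (γ κ : ℕ) : ℝ := (18 * (γ.choose 3 * κ.choose 3) : ℕ)

noncomputable def w4 (γ κ : ℕ) : ℝ :=
  (6 * (γ.choose 2 * κ.choose 4) + 6 * (γ.choose 4 * κ.choose 2) +
    36 * (γ.choose 3 * κ.choose 4) + 36 * (γ.choose 4 * κ.choose 3) +
    72 * (γ.choose 4 * κ.choose 4) : ℕ)

/-- `N₈(p)`: the expected number of cycle-8 candidates in the MD protograph. -/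
noncomputable def N8 (m M γ κ : ℕ) (p : Fin (m + 1) × Fin M → ℝ) : ℝ :=
  ∑ᶠ (b : ℤ) (_ : (M : ℤ) ∣ b),
    (w1 γ κ * ((fpa p 2) ^ 2 * (fpa p (-2)) ^ 2).coeff (0, b) +
     w2 γ κ * ((fpa p 2) * (fpa p (-2)) * (fpa p 1) ^ 2 * (fpa p (-1)) ^ 2).coeff (0, b) +
     w3 γ κ * ((fpa p 2) * (fpa p 1) ^ 2 * (fpa p (-1)) ^ 4).coeff (0, b) +
     w4 γ κ * ((fpa p 1) ^ 4 * (fpa p (-1)) ^ 4).coeff (0, b))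

namespace N8Deriv

variable {m M : ℕ}

open Finset
open scoped Pointwise

noncomputable def prodCoeff (as : List ℤ) (x : ℤ × ℤ) (p : Fin (m + 1) × Fin M → ℝ) : ℝ :=
  ((as.map (fpa p)).prod).coeff x

lemma coeff_fpa_mul (p : Fin (m + 1) × Fin M → ℝ) (a : ℤ) (g : AddMonoidAlgebra ℝ (ℤ × ℤ))
    (x : ℤ × ℤ) :
    (fpa p a * g).coeff x = ∑ ij, p ij * g.coeff (x - (a * ij.1, a * ij.2)) := by
  simp only [fpa, Finset.sum_mul, AddMonoidAlgebra.coeff_sum, Finsupp.finsetSum_apply,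
    AddMonoidAlgebra.coeff_single_mul_apply, sub_eq_neg_add]

lemma prodCoeff_nil (x : ℤ × ℤ) (p : Fin (m + 1) × Fin M → ℝ) :
    prodCoeff [] x p = if x = 0 then 1 else 0 := by
  simp [prodCoeff, AddMonoidAlgebra.one_def, AddMonoidAlgebra.coeff_single, Finsupp.single_apply,
    eq_comm]

lemma prodCoeff_cons (a : ℤ) (as : List ℤ) (x : ℤ × ℤ) (p : Fin (m + 1) × Fin M → ℝ) :
    prodCoeff (a :: as) x p = ∑ ij, p ij * prodCoeff as (x - (a * ij.1, a * ij.2)) p :=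
  coeff_fpa_mul p a _ x

lemma prodCoeff_perm {as bs : List ℤ} (h : as.Perm bs) (x : ℤ × ℤ)
    (p : Fin (m + 1) × Fin M → ℝ) : prodCoeff as x p = prodCoeff bs x p := by
  rw [prodCoeff, prodCoeff, (h.map _).prod_eq]

lemma prodCoeff_map_neg (as : List ℤ) (x : ℤ × ℤ) (p : Fin (m + 1) × Fin M → ℝ) :
    prodCoeff (as.map Neg.neg) x p = prodCoeff as (-x) p := by
  induction as generalizing x with
  | nil => simp [prodCoeff_nil]
  | cons a as ih =>
    rw [List.map_cons, prodCoeff_cons, prodCoeff_cons]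
    refine sum_congr rfl fun ij _ => ?_
    rw [ih]
    congr 2
    ext <;> simp <;> ring

lemma prodCoeff_eq_zero_of_lt (as : List ℤ) (x : ℤ × ℤ) (p : Fin (m + 1) × Fin M → ℝ)
    (h : (as.map abs).sum * M < |x.2|) : prodCoeff as x p = 0 := by
  induction as generalizing x with
  | nil =>
    rw [prodCoeff_nil, if_neg]
    rintro rfl
    simp at h
  | cons a as ih =>
    rw [prodCoeff_cons]
    refine sum_eq_zero fun ij _ => ?_
    have hj : |a * (ij.2 : ℤ)| ≤ |a| * M := by
      rw [abs_mul, Nat.abs_cast]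
      exact mul_le_mul_of_nonneg_left (by exact_mod_cast ij.2.is_lt.le) (abs_nonneg a)
    rw [ih, mul_zero]
    simp only [List.map_cons, List.sum_cons, add_mul, Prod.snd_sub] at h ⊢
    linarith [abs_sub_abs_le_abs_sub x.2 (a * ij.2)]

noncomputable def prodCoeffDeriv (as : List ℤ) (x : ℤ × ℤ) (p : Fin (m + 1) × Fin M → ℝ) :
    (Fin (m + 1) × Fin M → ℝ) →L[ℝ] ℝ :=
  ∑ kl : Fin (m + 1) × Fin M,
    (∑ t ∈ range as.length,
      prodCoeff (as.eraseIdx t) (x - (as.getD t 0 * kl.1, as.getD t 0 * kl.2)) p) •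
    ContinuousLinearMap.proj kl

lemma prodCoeffDeriv_apply_single (as : List ℤ) (x : ℤ × ℤ) (p : Fin (m + 1) × Fin M → ℝ)
    (kl : Fin (m + 1) × Fin M) :
    prodCoeffDeriv as x p (Pi.single kl 1) =
      ∑ t ∈ range as.length,
        prodCoeff (as.eraseIdx t) (x - (as.getD t 0 * kl.1, as.getD t 0 * kl.2)) p := by
  classical
  simp [prodCoeffDeriv, Pi.single_apply]

theorem hasFDerivAt_prodCoeff (as : List ℤ) (x : ℤ × ℤ) (p : Fin (m + 1) × Fin M → ℝ) :
    HasFDerivAt (prodCoeff as x) (prodCoeffDeriv as x p) p := by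
  induction as generalizing x with
  | nil =>
    convert hasFDerivAt_const (𝕜 := ℝ) (if x = 0 then (1 : ℝ) else 0) p using 1
    · exact funext (prodCoeff_nil x)
    · simp [prodCoeffDeriv]
  | cons a as ih =>
    rw [show prodCoeff (a :: as) x = _ from funext (prodCoeff_cons a as x)]
    refine (HasFDerivAt.fun_sum (u := univ) fun ij _ =>
      (ContinuousLinearMap.proj (R := ℝ) (φ := fun _ : Fin (m + 1) × Fin M => ℝ) ij
        ).hasFDerivAt.mul (ih (x - (a * ij.1, a * ij.2)))).congr_fderiv
      (ContinuousLinearMap.coe_injective <| (Pi.basisFun ℝ _).ext fun kl => ?_)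
    rw [Pi.basisFun_apply, ContinuousLinearMap.coe_coe, ContinuousLinearMap.coe_coe]
    simp only [_root_.sum_apply, add_apply, smul_apply, ContinuousLinearMap.proj_apply,
      smul_eq_mul, prodCoeffDeriv_apply_single, List.length_cons, sum_range_succ',
      List.eraseIdx_cons_succ, List.eraseIdx_cons_zero, List.getD_cons_succ, List.getD_cons_zero,
      prodCoeff_cons, mul_sum, sum_add_distrib]
    congr 1
    · rw [sum_comm]
      simp only [sub_right_comm]
    · simp [Pi.single_apply]

lemma sum_prodCoeff_neg_shift {S : Finset ℤ} (hS : -S = S) {bs cs : List ℤ}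
    (h : (bs.map Neg.neg).Perm cs) (c d : ℤ) (p : Fin (m + 1) × Fin M → ℝ) :
    ∑ b ∈ S, prodCoeff bs (-c, b - d) p = ∑ b ∈ S, prodCoeff cs (c, b + d) p := by
  conv_lhs => rw [← hS, sum_neg_index]
  refine sum_congr rfl fun b _ => ?_
  rw [← prodCoeff_perm h, prodCoeff_map_neg, Prod.neg_mk, neg_add']

variable {S : Finset ℤ}

lemma sum_prodCoeffDeriv_w1Monomial (hS : -S = S) (p : Fin (m + 1) × Fin M → ℝ)
    (kl : Fin (m + 1) × Fin M) :
    ∑ b ∈ S, prodCoeffDeriv [2, 2, -2, -2] (0, b) p (Pi.single kl 1) =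
      4 * ∑ b ∈ S, prodCoeff [2, 2, -2] (2 * kl.1, b + 2 * kl.2) p := by
  simp only [prodCoeffDeriv_apply_single, List.length_cons, List.length_nil, zero_add,
    sum_range_succ, sum_range_zero, List.eraseIdx_cons_zero, List.eraseIdx_cons_succ,
    List.getD_cons_zero, List.getD_cons_succ, Prod.mk_sub_mk, zero_sub, neg_mul, neg_neg,
    sub_neg_eq_add, sum_add_distrib,
    sum_prodCoeff_neg_shift hS (bs := [2, -2, -2]) (cs := [2, 2, -2]) (by decide)]
  ring

lemma sum_prodCoeffDeriv_w2Monomial (hS : -S = S) (p : Fin (m + 1) × Fin M → ℝ)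
    (kl : Fin (m + 1) × Fin M) :
    ∑ b ∈ S, prodCoeffDeriv [2, -2, 1, 1, -1, -1] (0, b) p (Pi.single kl 1) =
      2 * ∑ b ∈ S, prodCoeff [2, 1, 1, -1, -1] (2 * kl.1, b + 2 * kl.2) p +
      4 * ∑ b ∈ S, prodCoeff [2, -2, 1, 1, -1] (kl.1, b + kl.2) p := by
  simp only [prodCoeffDeriv_apply_single, List.length_cons, List.length_nil, zero_add,
    sum_range_succ, sum_range_zero, List.eraseIdx_cons_zero, List.eraseIdx_cons_succ,
    List.getD_cons_zero, List.getD_cons_succ, Prod.mk_sub_mk, zero_sub, one_mul, neg_mul, neg_neg,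
    sub_neg_eq_add, sum_add_distrib,
    sum_prodCoeff_neg_shift hS (bs := [-2, 1, 1, -1, -1]) (cs := [2, 1, 1, -1, -1])
      (by decide),
    sum_prodCoeff_neg_shift hS (bs := [2, -2, 1, -1, -1]) (cs := [2, -2, 1, 1, -1])
      (by decide)]
  ring

lemma sum_prodCoeffDeriv_w3Monomial (p : Fin (m + 1) × Fin M → ℝ) (kl : Fin (m + 1) × Fin M) :
    ∑ b ∈ S, prodCoeffDeriv [2, 1, 1, -1, -1, -1, -1] (0, b) p (Pi.single kl 1) =
      ∑ b ∈ S, prodCoeff [1, 1, -1, -1, -1, -1] (-(2 * kl.1), b - 2 * kl.2) p +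
      2 * ∑ b ∈ S, prodCoeff [2, 1, -1, -1, -1, -1] (-kl.1, b - kl.2) p +
      4 * ∑ b ∈ S, prodCoeff [2, 1, 1, -1, -1, -1] (kl.1, b + kl.2) p := by
  simp only [prodCoeffDeriv_apply_single, List.length_cons, List.length_nil, zero_add,
    sum_range_succ, sum_range_zero, List.eraseIdx_cons_zero, List.eraseIdx_cons_succ,
    List.getD_cons_zero, List.getD_cons_succ, Prod.mk_sub_mk, zero_sub, one_mul, neg_mul, neg_neg,
    sub_neg_eq_add, sum_add_distrib]
  ring

lemma sum_prodCoeffDeriv_w4Monomial (hS : -S = S) (p : Fin (m + 1) × Fin M → ℝ)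
    (kl : Fin (m + 1) × Fin M) :
    ∑ b ∈ S, prodCoeffDeriv [1, 1, 1, 1, -1, -1, -1, -1] (0, b) p (Pi.single kl 1) =
      8 * ∑ b ∈ S, prodCoeff [1, 1, 1, 1, -1, -1, -1] (kl.1, b + kl.2) p := by
  simp only [prodCoeffDeriv_apply_single, List.length_cons, List.length_nil, zero_add,
    sum_range_succ, sum_range_zero, List.eraseIdx_cons_zero, List.eraseIdx_cons_succ,
    List.getD_cons_zero, List.getD_cons_succ, Prod.mk_sub_mk, zero_sub, one_mul, neg_mul, neg_neg,
    sub_neg_eq_add, sum_add_distrib,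
    sum_prodCoeff_neg_shift hS (bs := [1, 1, 1, -1, -1, -1, -1])
      (cs := [1, 1, 1, 1, -1, -1, -1]) (by decide)]
  ring

noncomputable def window (M : ℕ) : Finset ℤ := (Icc (-(8 * M : ℤ)) (8 * M)).filter ((M : ℤ) ∣ ·)

lemma neg_window : -window M = window M := by
  ext b
  simp only [window, mem_neg', mem_filter, mem_Icc, dvd_neg]
  constructor <;> rintro ⟨⟨h₁, h₂⟩, h⟩ <;> exact ⟨⟨by linarith, by linarith⟩, h⟩

lemma finsum_dvd_eq_sum_window {F : ℤ → ℝ} (hF : ∀ b, (8 * M : ℤ) < |b| → F b = 0) :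
    ∑ᶠ (b : ℤ) (_ : (M : ℤ) ∣ b), F b = ∑ b ∈ window M, F b :=
  finsum_cond_eq_sum_of_cond_iff F fun {b} hb => by
    have : |b| ≤ (8 * M : ℤ) := not_lt.mp (mt (hF b) hb)
    simp [window, mem_filter, mem_Icc, ← abs_le, this]

noncomputable def n8Summand (γ κ : ℕ) (b : ℤ) (q : Fin (m + 1) × Fin M → ℝ) : ℝ :=
  w1 γ κ * prodCoeff [2, 2, -2, -2] (0, b) q +
  w2 γ κ * prodCoeff [2, -2, 1, 1, -1, -1] (0, b) q +
  w3 γ κ * prodCoeff [2, 1, 1, -1, -1, -1, -1] (0, b) q +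
  w4 γ κ * prodCoeff [1, 1, 1, 1, -1, -1, -1, -1] (0, b) q

lemma N8_eq_sum (γ κ : ℕ) : N8 m M γ κ = fun q => ∑ b ∈ window M, n8Summand γ κ b q := by
  funext q
  refine Eq.trans ?_ (finsum_dvd_eq_sum_window fun b hb => ?_)
  · refine finsum_congr fun b => finsum_congr fun _ => ?_
    simp only [n8Summand, prodCoeff, List.map_cons, List.map_nil, List.prod_cons, List.prod_nil]
    ring_nf
  · have hb' : ∀ n : ℤ, n ≤ 8 → n * M < |b| := fun n hn =>
      lt_of_le_of_lt (mul_le_mul_of_nonneg_right hn (by positivity)) hb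
    simp (disch := exact hb' _ (by norm_num)) only [n8Summand, prodCoeff_eq_zero_of_lt,
      mul_zero, add_zero]

lemma hasFDerivAt_N8 (γ κ : ℕ) (p : Fin (m + 1) × Fin M → ℝ) :
    HasFDerivAt (N8 m M γ κ) (∑ b ∈ window M,
      (w1 γ κ • prodCoeffDeriv [2, 2, -2, -2] (0, b) p +
       w2 γ κ • prodCoeffDeriv [2, -2, 1, 1, -1, -1] (0, b) p +
       w3 γ κ • prodCoeffDeriv [2, 1, 1, -1, -1, -1, -1] (0, b) p +
       w4 γ κ • prodCoeffDeriv [1, 1, 1, 1, -1, -1, -1, -1] (0, b) p)) p := by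
  rw [N8_eq_sum]
  exact HasFDerivAt.fun_sum fun b _ =>
    ((((hasFDerivAt_prodCoeff _ _ p).const_mul _).add
      ((hasFDerivAt_prodCoeff _ _ p).const_mul _)).add
      ((hasFDerivAt_prodCoeff _ _ p).const_mul _)).add
      ((hasFDerivAt_prodCoeff _ _ p).const_mul _)

noncomputable def n8PartialSummand (γ κ : ℕ) (p : Fin (m + 1) × Fin M → ℝ) (i : Fin (m + 1))
    (j : Fin M) (b : ℤ) : ℝ :=
  4 * w1 γ κ * prodCoeff [2, 2, -2] (2 * i, b + 2 * j) p +
  2 * w2 γ κ * prodCoeff [2, 1, 1, -1, -1] (2 * i, b + 2 * j) p +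
  4 * w2 γ κ * prodCoeff [2, -2, 1, 1, -1] (i, b + j) p +
  w3 γ κ * prodCoeff [1, 1, -1, -1, -1, -1] (-(2 * i), b - 2 * j) p +
  2 * w3 γ κ * prodCoeff [2, 1, -1, -1, -1, -1] (-i, b - j) p +
  4 * w3 γ κ * prodCoeff [2, 1, 1, -1, -1, -1] (i, b + j) p +
  8 * w4 γ κ * prodCoeff [1, 1, 1, 1, -1, -1, -1] (i, b + j) p

lemma fderiv_N8_apply_single (γ κ : ℕ) (p : Fin (m + 1) × Fin M → ℝ) (i : Fin (m + 1))
    (j : Fin M) :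
    fderiv ℝ (N8 m M γ κ) p (Pi.single (i, j) 1) =
      ∑ b ∈ window M, n8PartialSummand γ κ p i j b := by
  simp only [(hasFDerivAt_N8 γ κ p).fderiv, _root_.sum_apply, add_apply, smul_apply, smul_eq_mul,
    sum_add_distrib, ← mul_sum, sum_prodCoeffDeriv_w1Monomial neg_window,
    sum_prodCoeffDeriv_w2Monomial neg_window, sum_prodCoeffDeriv_w3Monomial,
    sum_prodCoeffDeriv_w4Monomial neg_window, n8PartialSummand]
  ring

lemma n8PartialSummand_eq_zero (γ κ : ℕ) (p : Fin (m + 1) × Fin M → ℝ) (i : Fin (m + 1))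
    (j : Fin M) {b : ℤ} (hb : 8 * M < |b|) : n8PartialSummand γ κ p i j b = 0 := by
  have hb' := lt_abs.1 hb
  have hj : ((j : ℕ) : ℤ) < M := by exact_mod_cast j.is_lt
  simp (disch := (norm_num; exact lt_abs.2 (by omega))) only [n8PartialSummand,
    prodCoeff_eq_zero_of_lt, mul_zero, add_zero]

end N8Deriv

open N8Deriv

theorem stmt11_general {m M γ κ : ℕ} :
    Differentiable ℝ (N8 m M γ κ) ∧
    ∀ (p : Fin (m + 1) × Fin M → ℝ) (i : Fin (m + 1)) (j : Fin M),
      fderiv ℝ (N8 m M γ κ) p (Pi.single (i, j) 1) =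
        ∑ᶠ (b : ℤ) (_ : (M : ℤ) ∣ b),
          (4 * w1 γ κ * ((fpa p 2) ^ 2 * (fpa p (-2))).coeff (2 * (i : ℤ), b + 2 * (j : ℤ)) +
           2 * w2 γ κ *
             ((fpa p 2) * (fpa p 1) ^ 2 * (fpa p (-1)) ^ 2).coeff (2 * (i : ℤ), b + 2 * (j : ℤ)) +
           4 * w2 γ κ *
             ((fpa p 2) * (fpa p (-2)) * (fpa p 1) ^ 2 * (fpa p (-1))).coeff ((i : ℤ), b + (j : ℤ)) +
           w3 γ κ * ((fpa p 1) ^ 2 * (fpa p (-1)) ^ 4).coeff (-(2 * (i : ℤ)), b - 2 * (j : ℤ)) +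
           2 * w3 γ κ *
             ((fpa p 2) * (fpa p 1) * (fpa p (-1)) ^ 4).coeff (-(i : ℤ), b - (j : ℤ)) +
           4 * w3 γ κ *
             ((fpa p 2) * (fpa p 1) ^ 2 * (fpa p (-1)) ^ 3).coeff ((i : ℤ), b + (j : ℤ)) +
           8 * w4 γ κ * ((fpa p 1) ^ 4 * (fpa p (-1)) ^ 3).coeff ((i : ℤ), b + (j : ℤ))) := by
  refine ⟨fun p => (hasFDerivAt_N8 γ κ p).differentiableAt, fun p i j => ?_⟩
  rw [fderiv_N8_apply_single,
    ← finsum_dvd_eq_sum_window fun b => n8PartialSummand_eq_zero γ κ p i j]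
  refine finsum_congr fun b => finsum_congr fun _ => ?_
  simp only [n8PartialSummand, prodCoeff, List.map_cons, List.map_nil, List.prod_cons,
    List.prod_nil]
  ring_nf

/-- `N₈` is differentiable everywhere, and the formula for its partial
derivative with respect to the coordinate `p(i,j)`. -/
theorem stmt11 {m M γ κ : ℕ} (hm : 1 ≤ m) (hM : 2 ≤ M) (hγ : 4 ≤ γ) (hκ : 4 ≤ κ) :
    Differentiable ℝ (N8 m M γ κ) ∧
    ∀ (p : Fin (m + 1) × Fin M → ℝ) (i : Fin (m + 1)) (j : Fin M),
      fderiv ℝ (N8 m M γ κ) p (Pi.single (i, j) 1) =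
        ∑ᶠ (b : ℤ) (_ : (M : ℤ) ∣ b),
          (4 * w1 γ κ * ((fpa p 2) ^ 2 * (fpa p (-2))).coeff (2 * (i : ℤ), b + 2 * (j : ℤ)) +
           2 * w2 γ κ *
             ((fpa p 2) * (fpa p 1) ^ 2 * (fpa p (-1)) ^ 2).coeff (2 * (i : ℤ), b + 2 * (j : ℤ)) +
           4 * w2 γ κ *
             ((fpa p 2) * (fpa p (-2)) * (fpa p 1) ^ 2 * (fpa p (-1))).coeff ((i : ℤ), b + (j : ℤ)) +
           w3 γ κ * ((fpa p 1) ^ 2 * (fpa p (-1)) ^ 4).coeff (-(2 * (i : ℤ)), b - 2 * (j : ℤ)) +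
           2 * w3 γ κ *
             ((fpa p 2) * (fpa p 1) * (fpa p (-1)) ^ 4).coeff (-(i : ℤ), b - (j : ℤ)) +
           4 * w3 γ κ *
             ((fpa p 2) * (fpa p 1) ^ 2 * (fpa p (-1)) ^ 3).coeff ((i : ℤ), b + (j : ℤ)) +
           8 * w4 γ κ * ((fpa p 1) ^ 4 * (fpa p (-1)) ^ 3).coeff ((i : ℤ), b + (j : ℤ))) :=
  stmt11_general
end
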